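/- arXiv:2506.19853 — 4 statements merged into one kernel-verified Lean document; each statement's English description precedes it below -/
import Mathlib

section
/- If 0 < ε ≤ 8n/(2n+1)² and n ≥ 1, then the function g_n(r) = r - ε·r^{2n+1}/(1+r^{2n}) is monotone increasing on (0,∞); consequently, for every I > 0 the equation g_n(r) = I has exactly one positive solution. -/
/-!
Writing `s = r ^ (2n)`, one has `(1 + s)² g_n'(r) = (1 - ε) s² + (2 - ε (2n + 1)) s + 1`,
a quadratic in `s` with discriminant `ε (ε (2n + 1)² - 8n) ≤ 0`. Hence `g_n' ≥ 0` and `g_n'`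
vanishes at most at one point, so `g_n` is strictly increasing on `(0, ∞)`. Since `0 < ε < 1`,
the bounds `(1 - ε) r ≤ g_n(r) ≤ r` and the intermediate value theorem give a solution of
`g_n(r) = I`, unique by monotonicity.
-/

open Set

theorem strictMonoOn_of_hasDerivWithinAt_nonneg_of_countable {D : Set ℝ} (hD : Convex ℝ D)
    {f f' : ℝ → ℝ} (hf : ContinuousOn f D)
    (hf' : ∀ x ∈ interior D, HasDerivWithinAt f (f' x) (interior D) x)
    (hf'₀ : ∀ x ∈ interior D, 0 ≤ f' x) (hzero : {x ∈ interior D | f' x = 0}.Countable) :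
    StrictMonoOn f D := by
  have hmono := monotoneOn_of_hasDerivWithinAt_nonneg hD hf hf' hf'₀
  intro a ha b hb hab
  refine (hmono ha hb hab.le).lt_of_ne fun hfab => ?_
  have hsub : Icc a b ⊆ D := hD.ordConnected.out ha hb
  have hconst : EqOn f (fun _ => f a) (Ioo a b) := fun x hx =>
    le_antisymm (hfab ▸ hmono (hsub (Ioo_subset_Icc_self hx)) hb hx.2.le)
      (hmono ha (hsub (Ioo_subset_Icc_self hx)) hx.1.le)
  have hIoo : Ioo a b ⊆ {x ∈ interior D | f' x = 0} := by
    intro x hx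
    have hxD : x ∈ interior D := interior_mono hsub (by rwa [interior_Icc])
    have hderiv : HasDerivAt f (f' x) x := (hf' x hxD).hasDerivAt (isOpen_interior.mem_nhds hxD)
    have hzero : HasDerivAt f 0 x :=
      (hasDerivAt_const x (f a)).congr_of_eventuallyEq
        (Filter.eventuallyEq_of_mem (isOpen_Ioo.mem_nhds hx) hconst)
    exact ⟨hxD, hderiv.unique hzero⟩
  exact (Cardinal.Real.Ioo_countable_iff.1 (hzero.mono hIoo)).not_gt hab

theorem exists_pos_eq_of_continuousOn_of_mul_le {f : ℝ → ℝ} {c C : ℝ}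
    (hf : ContinuousOn f (Ioi 0)) (hc : 0 < c) (hlow : ∀ r > 0, c * r ≤ f r)
    (hup : ∀ r > 0, f r ≤ C * r) {I : ℝ} (hI : 0 < I) : ∃ r > 0, f r = I := by
  have hcC : c ≤ C := by simpa using (hlow 1 one_pos).trans (hup 1 one_pos)
  have hC : 0 < C := hc.trans_le hcC
  have ha : 0 < I / C := div_pos hI hC
  have hab : I / C ≤ I / c := div_le_div_of_nonneg_left hI.le hc hcC
  have hfa : f (I / C) ≤ I := (hup _ ha).trans_eq (mul_div_cancel₀ I hC.ne')
  have hfb : I ≤ f (I / c) := (mul_div_cancel₀ I hc.ne').symm.trans_le (hlow _ (div_pos hI hc))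
  obtain ⟨r, hr, hrI⟩ := intermediate_value_Icc hab
    (hf.mono fun x hx => ha.trans_le hx.1) ⟨hfa, hfb⟩
  exact ⟨r, ha.trans_le hr.1, hrI⟩

noncomputable def gn (ε n r : ℝ) : ℝ := r - ε * r ^ (2 * n + 1) / (1 + r ^ (2 * n))

def gnDerivNum (ε n s : ℝ) : ℝ := (1 - ε) * s ^ 2 + (2 - ε * (2 * n + 1)) * s + 1

section

variable {ε n s : ℝ}

lemma sq_le_sq_mul_gnDerivNum (hn : 0 < n) (hε : ε * (2 * n + 1) ^ 2 ≤ 8 * n) (hs : 0 ≤ s) :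
    ((2 * n - 1) * s - (2 * n + 1)) ^ 2 ≤ (2 * n + 1) ^ 2 * gnDerivNum ε n s := by
  have hrest : 0 ≤ (8 * n - ε * (2 * n + 1) ^ 2) * (s ^ 2 + (2 * n + 1) * s) :=
    mul_nonneg (by linarith) (by positivity)
  -- At `ε = 8n / (2n + 1)²` the second summand vanishes, leaving the double root
  -- `s = (2n + 1) / (2n - 1)`.
  have hsplit : (2 * n + 1) ^ 2 * gnDerivNum ε n s = ((2 * n - 1) * s - (2 * n + 1)) ^ 2 +
      (8 * n - ε * (2 * n + 1) ^ 2) * (s ^ 2 + (2 * n + 1) * s) := by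
    unfold gnDerivNum; ring
  rw [hsplit]
  exact le_add_of_nonneg_right hrest

lemma gnDerivNum_nonneg (hn : 0 < n) (hε : ε * (2 * n + 1) ^ 2 ≤ 8 * n) (hs : 0 ≤ s) :
    0 ≤ gnDerivNum ε n s :=
  nonneg_of_mul_nonneg_right ((sq_nonneg _).trans (sq_le_sq_mul_gnDerivNum hn hε hs))
    (by positivity)

lemma eq_of_gnDerivNum_eq_zero (hn : 0 < n) (hε : ε * (2 * n + 1) ^ 2 ≤ 8 * n) (hs : 0 ≤ s)
    (hQ : gnDerivNum ε n s = 0) : (2 * n - 1) * s = 2 * n + 1 := by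
  have hsq := sq_le_sq_mul_gnDerivNum hn hε hs
  rw [hQ, mul_zero] at hsq
  linarith [pow_eq_zero_iff two_ne_zero |>.1 (le_antisymm hsq (sq_nonneg _))]

end

section

variable {ε n r : ℝ}

lemma hasDerivAt_gn (hr : 0 < r) :
    HasDerivAt (gn ε n) (gnDerivNum ε n (r ^ (2 * n)) / (1 + r ^ (2 * n)) ^ 2) r := by
  have hD : 0 < 1 + r ^ (2 * n) := by positivity
  have hnum : HasDerivAt (fun r : ℝ => ε * r ^ (2 * n + 1))
      (ε * ((2 * n + 1) * r ^ (2 * n + 1 - 1))) r :=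
    (Real.hasDerivAt_rpow_const (Or.inl hr.ne')).const_mul ε
  have hden : HasDerivAt (fun r : ℝ => 1 + r ^ (2 * n)) (2 * n * r ^ (2 * n - 1)) r :=
    (Real.hasDerivAt_rpow_const (Or.inl hr.ne')).const_add 1
  refine ((hasDerivAt_id r).sub (hnum.div hden hD.ne')).congr_deriv ?_
  have e1 : r ^ (2 * n + 1 - 1) = r ^ (2 * n) := by norm_num
  have e2 : r ^ (2 * n + 1) = r ^ (2 * n) * r := Real.rpow_add_one hr.ne' _
  have e3 : r ^ (2 * n) = r ^ (2 * n - 1) * r := by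
    rw [← Real.rpow_add_one hr.ne']; norm_num
  rw [gnDerivNum, e1, e2, e3]
  field_simp
  ring

lemma continuousOn_gn : ContinuousOn (gn ε n) (Ioi 0) := fun _ hr =>
  (hasDerivAt_gn hr).continuousAt.continuousWithinAt

lemma sub_mul_le_gn (hε : 0 ≤ ε) (hr : 0 < r) : (1 - ε) * r ≤ gn ε n r := by
  have hD : 0 < 1 + r ^ (2 * n) := by positivity
  have : ε * r ^ (2 * n + 1) / (1 + r ^ (2 * n)) ≤ ε * r := by
    rw [div_le_iff₀ hD, Real.rpow_add_one hr.ne']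
    nlinarith [mul_nonneg hε hr.le]
  unfold gn; linarith

lemma gn_le_self (hε : 0 ≤ ε) (hr : 0 < r) : gn ε n r ≤ r := by
  unfold gn
  have : 0 ≤ ε * r ^ (2 * n + 1) / (1 + r ^ (2 * n)) := by positivity
  linarith

lemma strictMonoOn_gn (hn : 0 < n) (hε : ε * (2 * n + 1) ^ 2 ≤ 8 * n) :
    StrictMonoOn (gn ε n) (Ioi 0) := by
  refine strictMonoOn_of_hasDerivWithinAt_nonneg_of_countable (convex_Ioi 0) continuousOn_gn
    (fun r hr => (hasDerivAt_gn (interior_Ioi.subset hr)).hasDerivWithinAt)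
    (fun r hr => div_nonneg
      (gnDerivNum_nonneg hn hε (Real.rpow_nonneg (interior_Ioi.subset hr).le _))
      (by positivity)) ?_
  have hcrit : ∀ x ∈ {x ∈ interior (Ioi 0) |
      gnDerivNum ε n (x ^ (2 * n)) / (1 + x ^ (2 * n)) ^ 2 = 0},
      0 < x ∧ (2 * n - 1) * x ^ (2 * n) = 2 * n + 1 := by
    rintro x ⟨hx, hQ⟩
    have hx : 0 < x := interior_Ioi.subset hx
    refine ⟨hx, eq_of_gnDerivNum_eq_zero hn hε (by positivity) ?_⟩
    exact (div_eq_zero_iff.1 hQ).resolve_right (by positivity)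
  refine Subsingleton.countable fun x hx y hy => ?_
  obtain ⟨hx, hxc⟩ := hcrit x hx
  obtain ⟨hy, hyc⟩ := hcrit y hy
  have h2n : 2 * n - 1 ≠ 0 := fun h => by rw [h, zero_mul] at hxc; linarith
  exact Real.rpow_left_injOn (by positivity) hx.le hy.le
    (mul_left_cancel₀ h2n (hxc.trans hyc.symm))

end

/-- If `0 < ε ≤ 8n/(2n+1)²` and `n ≥ 1`, then `g_n(r) = r - ε r^(2n+1)/(1+r^(2n))`
is monotone increasing on `(0, ∞)`; consequently, for every `I > 0` the equation
`g_n(r) = I` has exactly one positive solution. -/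
theorem gn_strictMono_and_unique_steady_state (ε n : ℝ) (hn : 1 ≤ n)
    (hε0 : 0 < ε) (hε : ε ≤ 8 * n / (2 * n + 1) ^ 2) :
    StrictMonoOn (fun r : ℝ => r - ε * r ^ (2 * n + 1) / (1 + r ^ (2 * n))) (Set.Ioi 0) ∧
    ∀ I : ℝ, 0 < I →
      ∃! r : ℝ, 0 < r ∧ r - ε * r ^ (2 * n + 1) / (1 + r ^ (2 * n)) = I := by
  have hε' : ε * (2 * n + 1) ^ 2 ≤ 8 * n := (le_div_iff₀ (by positivity)).1 hε
  have hε1 : ε < 1 := by nlinarith [sq_nonneg (2 * n - 1)]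
  have hmono : StrictMonoOn (gn ε n) (Ioi 0) := strictMonoOn_gn (by linarith) hε'
  refine ⟨hmono, fun I hI => ?_⟩
  obtain ⟨r, hr, hrI⟩ := exists_pos_eq_of_continuousOn_of_mul_le continuousOn_gn
    (sub_pos.2 hε1) (fun r hr => sub_mul_le_gn hε0.le hr)
    (fun r hr => (gn_le_self hε0.le hr).trans_eq (one_mul r).symm) hI
  exact ⟨r, ⟨hr, hrI⟩, fun y hy => hmono.injOn hy.1 hr (hy.2.trans hrI.symm)⟩
end

section
/- The function g : (-1,1) → ℝ, g(x) = arccos(x)/√(1-x²), is strictly decreasing. -/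
/-! Substituting `x = cos θ` turns `g` into `θ ↦ θ / sin θ` on `(0, π)`, composed with the
decreasing map `arccos`. Since `sin` is strictly concave on `[0, π]` and vanishes at `0`, the
slope `sin θ / θ` of its chord from the origin strictly decreases, so its reciprocal
`θ / sin θ` strictly increases. -/

open Real Set

theorem StrictConcaveOn.div_strictAntiOn {s : Set ℝ} {f : ℝ → ℝ} (hf : StrictConcaveOn ℝ s f)
    (h0 : (0 : ℝ) ∈ s) (hf0 : f 0 = 0) : StrictAntiOn (fun x => f x / x) (s \ {0}) :=
  fun x hx y hy hxy => by
    simpa [hf0] using hf.secant_strict_mono h0 hx.1 hy.1 hx.2 hy.2 hxy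

theorem Real.sin_div_strictAntiOn : StrictAntiOn (fun θ => sin θ / θ) (Ioo 0 π) :=
  (strictConcaveOn_sin_Icc.div_strictAntiOn ⟨le_rfl, pi_pos.le⟩ sin_zero).mono
    fun _ hθ => ⟨Ioo_subset_Icc_self hθ, hθ.1.ne'⟩

theorem Real.div_sin_strictMonoOn : StrictMonoOn (fun θ => θ / sin θ) (Ioo 0 π) :=
  fun x hx y hy hxy => by
    simpa only [inv_div] using
      inv_strictAntiOn (div_pos (sin_pos_of_pos_of_lt_pi hy.1 hy.2) hy.1)
        (div_pos (sin_pos_of_pos_of_lt_pi hx.1 hx.2) hx.1) (sin_div_strictAntiOn hx hy hxy)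

theorem Real.arccos_mem_Ioo {x : ℝ} (hx : x ∈ Ioo (-1 : ℝ) 1) : arccos x ∈ Ioo 0 π :=
  ⟨arccos_pos.2 hx.2, arccos_lt_pi.2 hx.1⟩

/-- The function `g(x) = arccos(x)/√(1-x²)` is strictly decreasing on `(-1, 1)`. -/
theorem arccos_div_sqrt_strictAnti :
    StrictAntiOn (fun x : ℝ => Real.arccos x / Real.sqrt (1 - x ^ 2))
      (Set.Ioo (-1 : ℝ) 1) := by
  simp_rw [← sin_arccos]
  exact div_sin_strictMonoOn.comp_strictAntiOn
    (strictAntiOn_arccos.mono Ioo_subset_Icc_self) fun _ => arccos_mem_Ioo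
end

section
/- If 0 < x < 1 then 1 < arccos(x)/√(1-x²) < π/2. Consequently τ₀¹ = τ_r·g(ε(f(r²)+2r²f'(r²))) lies in the open interval (τ_r, τ_r·π/2) whenever the argument lies in (0,1). -/
/-! With `t = arccos x ∈ (0, π/2)` one has `√(1 - x²) = sin t`, so the claim is
`sin t < t < (π/2) sin t`: the first is `sin t < t`, the second is Jordan's inequality. -/

open Real

theorem one_lt_arccos_div_sqrt_one_sub_sq {x : ℝ} (hx₁ : -1 < x) (hx₂ : x < 1) :
    1 < arccos x / √(1 - x ^ 2) := by
  have hsqrt : 0 < √(1 - x ^ 2) := sqrt_pos.2 (by nlinarith)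
  rw [one_lt_div hsqrt, ← sin_arccos]
  exact sin_lt (arccos_pos.2 hx₂)

theorem arccos_div_sqrt_one_sub_sq_lt_pi_div_two {x : ℝ} (hx₀ : 0 < x) (hx₁ : x < 1) :
    arccos x / √(1 - x ^ 2) < π / 2 := by
  have hsqrt : 0 < √(1 - x ^ 2) := sqrt_pos.2 (by nlinarith)
  have hjordan := mul_lt_sin (arccos_pos.2 hx₁) (arccos_lt_pi_div_two.2 hx₀)
  rw [div_lt_iff₀ hsqrt, ← sin_arccos]
  rw [div_mul_eq_mul_div, div_lt_iff₀ pi_pos] at hjordan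
  linarith

/-- If `0 < x < 1` then `1 < arccos(x)/√(1-x²) < π/2`. Consequently, for `τ_r > 0`,
the critical delay `τ_r · g(x)` lies in `(τ_r, τ_r π/2)` whenever `x ∈ (0,1)`. -/
theorem arccos_div_sqrt_between_one_and_pi_div_two :
    (∀ x : ℝ, 0 < x → x < 1 →
      1 < Real.arccos x / Real.sqrt (1 - x ^ 2) ∧
      Real.arccos x / Real.sqrt (1 - x ^ 2) < Real.pi / 2) ∧
    ∀ (τr x : ℝ), 0 < τr → 0 < x → x < 1 →
      τr * (Real.arccos x / Real.sqrt (1 - x ^ 2)) ∈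
        Set.Ioo τr (τr * Real.pi / 2) := by
  have bounds (x : ℝ) (hx₀ : 0 < x) (hx₁ : x < 1) :
      1 < arccos x / √(1 - x ^ 2) ∧ arccos x / √(1 - x ^ 2) < π / 2 :=
    ⟨one_lt_arccos_div_sqrt_one_sub_sq (by linarith) hx₁,
      arccos_div_sqrt_one_sub_sq_lt_pi_div_two hx₀ hx₁⟩
  refine ⟨bounds, fun τr x hτr hx₀ hx₁ => ?_⟩
  obtain ⟨hlower, hupper⟩ := bounds x hx₀ hx₁
  constructor
  · simpa using mul_lt_mul_of_pos_left hlower hτr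
  · rw [mul_div_assoc]
    exact mul_lt_mul_of_pos_left hupper hτr
end

section
/- Let r, ε, τ_r, τ_w > 0, let f be the Hill function f(x) = x^n/(1+x^n) with n ≥ 1, and set w = ε·f(r²). Then for any λ ∈ ℂ and τ ≥ 0, the characteristic determinant of the three-equation model at the symmetric steady state factorizes as: τ_r²τ_w·det C(λ) = (τ_r λ + w + e^{-τλ}) · (τ_r τ_w λ² + (τ_r - τ_w w)λ - 2ε f'(r²) r² - w + (τ_w λ + 1)e^{-τλ}). -/
/-!
Subtracting the second row of `C(λ)` from the first leaves `(λ + (w + e^{-λτ})/τ_r) · (1, -1, 0)`,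
because the two rate equations are interchanged by `r₁ ↔ r₂`. This splits off the
antisymmetric mode; the remaining `2 × 2` minor gives the symmetric factor.
-/

open Complex

theorem Matrix.det_fin_three_of_rows_swap_symm {R : Type*} [CommRing R] (a b c d e : R) :
    !![a, b, c; b, a, c; d, d, e].det = (a - b) * ((a + b) * e - 2 * c * d) := by
  simp [Matrix.det_fin_three]
  ring

theorem three_eq_characteristic_factorization_general
    (r ε τr τw : ℝ) (hτr : 0 < τr) (hτw : 0 < τw) (f : ℝ → ℝ) (w : ℝ) (τ : ℝ) (lam : ℂ) :
    let A : Matrix (Fin 3) (Fin 3) ℂ :=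
      Matrix.of ![![0, (w / τr : ℝ), (r / τr : ℝ)],
        ![(w / τr : ℝ), 0, (r / τr : ℝ)],
        ![(ε * r * deriv f (r ^ 2) / τw : ℝ), (ε * r * deriv f (r ^ 2) / τw : ℝ),
          (-(1 / τw) : ℝ)]]
    let B : Matrix (Fin 3) (Fin 3) ℂ :=
      Matrix.of ![![(-(1 / τr) : ℝ), 0, 0], ![0, (-(1 / τr) : ℝ), 0], ![0, 0, 0]]
    let C : Matrix (Fin 3) (Fin 3) ℂ :=
      lam • (1 : Matrix (Fin 3) (Fin 3) ℂ) - A - Complex.exp (-lam * τ) • B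
    (τr : ℂ) ^ 2 * (τw : ℂ) * C.det =
      ((τr : ℂ) * lam + (w : ℂ) + Complex.exp (-(τ : ℂ) * lam)) *
        ((τr : ℂ) * (τw : ℂ) * lam ^ 2 + ((τr : ℂ) - (τw : ℂ) * (w : ℂ)) * lam -
          2 * (ε : ℂ) * ((deriv f (r ^ 2) : ℝ) : ℂ) * (r : ℂ) ^ 2 - (w : ℂ) +
          ((τw : ℂ) * lam + 1) * Complex.exp (-(τ : ℂ) * lam)) := by
  intro A B C
  set E := Complex.exp (-(τ : ℂ) * lam)
  set g : ℂ := ε * r * ((deriv f (r ^ 2) : ℝ) : ℂ) / τw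
  have hC : C = !![lam + E / τr, -(w / τr), -(r / τr); -(w / τr), lam + E / τr, -(r / τr);
      -g, -g, lam + 1 / τw] := by
    have hE : Complex.exp (-lam * τ) = E := by rw [neg_mul, mul_comm, ← neg_mul]
    simp only [C, hE]
    ext i j
    fin_cases i <;> fin_cases j <;> simp [A, B, g, div_eq_mul_inv]
  have hτr' : (τr : ℂ) ≠ 0 := ofReal_ne_zero.2 hτr.ne'
  have hτw' : (τw : ℂ) ≠ 0 := ofReal_ne_zero.2 hτw.ne'
  rw [hC, Matrix.det_fin_three_of_rows_swap_symm]
  simp only [g]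
  field_simp
  ring

/-- The characteristic determinant of the three-equation delayed model, linearized at
the symmetric steady state `(r, r, w)` with `w = ε f(r²)`, `f` the Hill function with
exponent `n ≥ 1`, factorizes as
`τ_r² τ_w det C(λ) = (τ_r λ + w + e^{-τλ}) ·
  (τ_r τ_w λ² + (τ_r - τ_w w)λ - 2ε f'(r²) r² - w + (τ_w λ + 1) e^{-τλ})`. -/
theorem three_eq_characteristic_factorization
    (r ε τr τw n : ℝ) (hr : 0 < r) (hε : 0 < ε) (hτr : 0 < τr) (hτw : 0 < τw)
    (hn : 1 ≤ n) (f : ℝ → ℝ) (hf : ∀ x : ℝ, f x = x ^ n / (1 + x ^ n))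
    (w : ℝ) (hw : w = ε * f (r ^ 2)) (τ : ℝ) (hτ : 0 ≤ τ) (lam : ℂ) :
    let A : Matrix (Fin 3) (Fin 3) ℂ :=
      Matrix.of ![![0, (w / τr : ℝ), (r / τr : ℝ)],
        ![(w / τr : ℝ), 0, (r / τr : ℝ)],
        ![(ε * r * deriv f (r ^ 2) / τw : ℝ), (ε * r * deriv f (r ^ 2) / τw : ℝ),
          (-(1 / τw) : ℝ)]]
    let B : Matrix (Fin 3) (Fin 3) ℂ :=
      Matrix.of ![![(-(1 / τr) : ℝ), 0, 0], ![0, (-(1 / τr) : ℝ), 0], ![0, 0, 0]]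
    let C : Matrix (Fin 3) (Fin 3) ℂ :=
      lam • (1 : Matrix (Fin 3) (Fin 3) ℂ) - A - Complex.exp (-lam * τ) • B
    (τr : ℂ) ^ 2 * (τw : ℂ) * C.det =
      ((τr : ℂ) * lam + (w : ℂ) + Complex.exp (-(τ : ℂ) * lam)) *
        ((τr : ℂ) * (τw : ℂ) * lam ^ 2 + ((τr : ℂ) - (τw : ℂ) * (w : ℂ)) * lam -
          2 * (ε : ℂ) * ((deriv f (r ^ 2) : ℝ) : ℂ) * (r : ℂ) ^ 2 - (w : ℂ) +
          ((τw : ℂ) * lam + 1) * Complex.exp (-(τ : ℂ) * lam)) :=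
  three_eq_characteristic_factorization_general r ε τr τw hτr hτw f w τ lam
end
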